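/- If two finite groups G and H are isoclinic, then cp₂(G) = cp₂(H). -/

import Mathlib

open Subgroup QuotientGroup

section Aux

variable {G : Type*} [Group G]

lemma commute_center_mul (x y z w : G) (hz : z ∈ Subgroup.center G)
    (hw : w ∈ Subgroup.center G) : Commute (x * z) (y * w) ↔ Commute x y := by
  have cz : ∀ g : G, Commute g z := fun g => Subgroup.mem_center_iff.mp hz g
  have cw : ∀ g : G, Commute g w := fun g => Subgroup.mem_center_iff.mp hw g
  constructor
  · intro h
    have h1 : Commute (x * z) (y * w * w⁻¹) := h.mul_right (cw (x * z)).inv_right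
    have h2 : Commute (x * z * z⁻¹) (y * w * w⁻¹) :=
      h1.mul_left ((cz (y * w * w⁻¹)).symm.inv_left)
    simpa using h2
  · intro h
    exact (h.mul_right (cw x)).mul_left ((cz (y * w)).symm)

lemma commute_of_mk_eq {x x' y y' : G}
    (hx : (x : G ⧸ Subgroup.center G) = (x' : G ⧸ Subgroup.center G))
    (hy : (y : G ⧸ Subgroup.center G) = (y' : G ⧸ Subgroup.center G)) :
    Commute x y ↔ Commute x' y' := by
  rw [QuotientGroup.eq] at hx hy
  have hx' : x' = x * (x⁻¹ * x') := by group
  have hy' : y' = y * (y⁻¹ * y') := by group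
  rw [hx', hy', commute_center_mul x y _ _ hx hy]

/-- pairs as functions equiv pairs -/
def pairEquiv (G : Type*) [Group G] :
    {v : Fin 2 → G // ∀ i j, Commute (v i) (v j)} ≃ {p : G × G // Commute p.1 p.2} where
  toFun v := ⟨(v.1 0, v.1 1), v.2 0 1⟩
  invFun p := ⟨![p.1.1, p.1.2], by
    intro i j
    fin_cases i <;> fin_cases j <;>
      simp only [Matrix.cons_val_zero, Matrix.cons_val_one, Matrix.head_cons] <;>
      first
        | exact Commute.refl _
        | exact p.2
        | exact p.2.symm⟩
  left_inv v := by
    ext i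
    fin_cases i <;> simp
  right_inv p := rfl

/-- decompose commuting pairs via center -/
noncomputable def reprEquiv (G : Type*) [Group G] :
    {p : G × G // Commute p.1 p.2} ≃
    {pq : (G ⧸ Subgroup.center G) × (G ⧸ Subgroup.center G) //
        Commute pq.1.out pq.2.out} × (Subgroup.center G × Subgroup.center G) where
  toFun p :=
    (⟨((p.1.1 : G ⧸ Subgroup.center G), (p.1.2 : G ⧸ Subgroup.center G)), by
        refine (commute_of_mk_eq ?_ ?_).mp p.2 <;> simp [QuotientGroup.out_eq']⟩,
      (⟨((p.1.1 : G ⧸ Subgroup.center G)).out⁻¹ * p.1.1, by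
          rw [← QuotientGroup.eq, QuotientGroup.out_eq']⟩,
       ⟨((p.1.2 : G ⧸ Subgroup.center G)).out⁻¹ * p.1.2, by
          rw [← QuotientGroup.eq, QuotientGroup.out_eq']⟩))
  invFun q := ⟨(q.1.1.1.out * q.2.1, q.1.1.2.out * q.2.2),
    (commute_center_mul _ _ _ _ q.2.1.2 q.2.2.2).mpr q.1.2⟩
  left_inv p := by
    ext <;> simp
  right_inv q := by
    obtain ⟨⟨⟨a, b⟩, hab⟩, ⟨z, hz⟩, ⟨w, hw⟩⟩ := q
    have ha : ((a.out * z : G) : G ⧸ Subgroup.center G) = a := by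
      rw [QuotientGroup.mk_mul, QuotientGroup.out_eq',
        (QuotientGroup.eq_one_iff z).mpr hz, mul_one]
    have hb : ((b.out * w : G) : G ⧸ Subgroup.center G) = b := by
      rw [QuotientGroup.mk_mul, QuotientGroup.out_eq',
        (QuotientGroup.eq_one_iff w).mpr hw, mul_one]
    refine Prod.ext (Subtype.ext (Prod.ext ?_ ?_)) (Prod.ext (Subtype.ext ?_) (Subtype.ext ?_))
    · exact ha
    · exact hb
    · show (((a.out * z : G) : G ⧸ Subgroup.center G)).out⁻¹ * (a.out * z) = z
      rw [ha]; group
    · show (((b.out * w : G) : G ⧸ Subgroup.center G)).out⁻¹ * (b.out * w) = w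
      rw [hb]; group
end Aux

/-- `cp G n` : the probability that a random `n`-tuple of elements of `G` pairwise commutes. -/
noncomputable def cp (G : Type*) [Group G] (n : ℕ) : ℚ :=
  (Nat.card {v : Fin n → G // ∀ i j, Commute (v i) (v j)} : ℚ) / (Nat.card G : ℚ) ^ n

open scoped commutatorElement

theorem isoclinic_cp2_eq (G H : Type*) [Group G] [Fintype G] [Group H] [Fintype H]
    (φ : (G ⧸ Subgroup.center G) ≃* (H ⧸ Subgroup.center H))
    (ψ : commutator G ≃* commutator H)
    (hcomp : ∀ (a b : G) (a' b' : H),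
      φ ((a : G ⧸ Subgroup.center G)) = (a' : H ⧸ Subgroup.center H) →
      φ ((b : G ⧸ Subgroup.center G)) = (b' : H ⧸ Subgroup.center H) →
      (ψ ⟨⁅a, b⁆, Subgroup.commutator_mem_commutator (Subgroup.mem_top a)
          (Subgroup.mem_top b)⟩ : H) = ⁅a', b'⁆) :
    cp G 2 = cp H 2 := by
  classical
  have key : ∀ (a b : G) (a' b' : H),
      φ ((a : G ⧸ Subgroup.center G)) = (a' : H ⧸ Subgroup.center H) →
      φ ((b : G ⧸ Subgroup.center G)) = (b' : H ⧸ Subgroup.center H) →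
      (Commute a b ↔ Commute a' b') := by
    intro a b a' b' ha hb
    have hc := hcomp a b a' b' ha hb
    rw [← commutatorElement_eq_one_iff_commute, ← commutatorElement_eq_one_iff_commute]
    constructor
    · intro h
      rw [← hc]
      have h1 : (⟨⁅a, b⁆, Subgroup.commutator_mem_commutator (Subgroup.mem_top a)
          (Subgroup.mem_top b)⟩ : commutator G) = 1 := Subtype.ext h
      rw [h1, map_one, OneMemClass.coe_one]
    · intro h
      rw [h] at hc
      have h1 : ψ ⟨⁅a, b⁆, Subgroup.commutator_mem_commutator (Subgroup.mem_top a)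
          (Subgroup.mem_top b)⟩ = 1 := Subtype.ext hc
      have h2 := ψ.injective (h1.trans (map_one ψ).symm)
      exact congrArg Subtype.val h2
  have qkey : ∀ p q : G ⧸ Subgroup.center G,
      Commute p.out q.out ↔ Commute (φ p).out (φ q).out := by
    intro p q
    exact key p.out q.out (φ p).out (φ q).out
      (by rw [QuotientGroup.out_eq', QuotientGroup.out_eq'])
      (by rw [QuotientGroup.out_eq', QuotientGroup.out_eq'])
  have e : {pq : (G ⧸ Subgroup.center G) × (G ⧸ Subgroup.center G) //
        Commute pq.1.out pq.2.out} ≃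
      {pq : (H ⧸ Subgroup.center H) × (H ⧸ Subgroup.center H) //
        Commute pq.1.out pq.2.out} :=
    (Equiv.prodCongr φ.toEquiv φ.toEquiv).subtypeEquiv (by rintro ⟨p, q⟩; exact qkey p q)
  set m := Nat.card {pq : (G ⧸ Subgroup.center G) × (G ⧸ Subgroup.center G) //
      Commute pq.1.out pq.2.out} with hm_def
  have hm : Nat.card {pq : (H ⧸ Subgroup.center H) × (H ⧸ Subgroup.center H) //
      Commute pq.1.out pq.2.out} = m := Nat.card_congr e.symm
  set n := Nat.card (G ⧸ Subgroup.center G) with hn_def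
  have hn : Nat.card (H ⧸ Subgroup.center H) = n := Nat.card_congr φ.toEquiv.symm
  set zG := Nat.card (Subgroup.center G) with hzG_def
  set zH := Nat.card (Subgroup.center H) with hzH_def
  have hG : Nat.card {v : Fin 2 → G // ∀ i j, Commute (v i) (v j)} = m * (zG * zG) := by
    rw [Nat.card_congr ((pairEquiv G).trans (reprEquiv G)), Nat.card_prod, Nat.card_prod]
  have hH : Nat.card {v : Fin 2 → H // ∀ i j, Commute (v i) (v j)} = m * (zH * zH) := by
    rw [Nat.card_congr ((pairEquiv H).trans (reprEquiv H)), Nat.card_prod, Nat.card_prod, hm]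
  have hGcard : Nat.card G = n * zG :=
    Subgroup.card_eq_card_quotient_mul_card_subgroup (Subgroup.center G)
  have hHcard : Nat.card H = n * zH := by
    rw [Subgroup.card_eq_card_quotient_mul_card_subgroup (Subgroup.center H), hn]
  have hn0 : (n : ℚ) ≠ 0 := Nat.cast_ne_zero.mpr Nat.card_pos.ne'
  have hzG0 : (zG : ℚ) ≠ 0 := Nat.cast_ne_zero.mpr Nat.card_pos.ne'
  have hzH0 : (zH : ℚ) ≠ 0 := Nat.cast_ne_zero.mpr Nat.card_pos.ne'
  unfold cp
  rw [hG, hH, hGcard, hHcard]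
  push_cast
  field_simp
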